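/- arXiv:2006.02124 — 2 statements merged into one kernel-verified Lean document; each statement's English description precedes it below -/
import Mathlib

section
/- Let G be a graph, H a graph with root vertex v ∈ V(H), and let f be a γ_I(G∘_v H)-function such that B_f = {x ∈ V(G) : ω(f_x) = γ_I(H) − 1} is nonempty. Then, writing m = γ_I(H), the set A_f = {x ∈ V(G) : ω(f_x) ≥ m} equals A_f^{0,m} ∪ A_f^{1,m} ∪ A_f^{2,m} ∪ A_f^{2,m+1}, where A_f^{i,j} = {x ∈ A_f : f(x) = i and ω(f_x) = j}. -/
open Finset

open scoped Classical

/-- An Italian dominating function on a finite simple graph: values in {0,1,2} and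
every vertex with value 0 has neighbour values summing to at least 2. -/
noncomputable def IsIDF {α : Type*} [Fintype α] (G : SimpleGraph α) (f : α → ℕ) : Prop :=
  (∀ u, f u ≤ 2) ∧
    ∀ u, f u = 0 → 2 ≤ ∑ w ∈ Finset.univ.filter (fun w => G.Adj u w), f w

/-- The Italian domination number γ_I(G). -/
noncomputable def italianNumber {α : Type*} [Fintype α] (G : SimpleGraph α) : ℕ :=
  sInf {n | ∃ f : α → ℕ, IsIDF G f ∧ ∑ u, f u = n}

/-- A γ_I(G)-function: an IDF on G of minimum weight. -/
noncomputable def IsMinIDF {α : Type*} [Fintype α] (G : SimpleGraph α) (f : α → ℕ) : Prop :=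
  IsIDF G f ∧ ∑ u, f u = italianNumber G

/-- D is a dominating set of G. -/
def IsDomSet {α : Type*} (G : SimpleGraph α) (D : Set α) : Prop :=
  ∀ u ∉ D, ∃ w ∈ D, G.Adj u w

/-- The domination number γ(G). -/
noncomputable def dominationNumber {α : Type*} [Fintype α] (G : SimpleGraph α) : ℕ :=
  sInf {n | ∃ D : Finset α, IsDomSet G ↑D ∧ D.card = n}

/-- The degree of a vertex. -/
noncomputable def deg {α : Type*} [Fintype α] (G : SimpleGraph α) (u : α) : ℕ :=
  (Finset.univ.filter (fun w => G.Adj u w)).card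

/-- The rooted product G∘_v H: one copy of H for each vertex of G, the root v of the
x-th copy being identified with the vertex x of G. The pair (x, y) is the vertex y of
the x-th copy of H; in particular (x, v) is the vertex x of G. -/
def rootedProd {α β : Type*} (G : SimpleGraph α) (H : SimpleGraph β) (v : β) :
    SimpleGraph (α × β) where
  Adj p q := (p.1 = q.1 ∧ H.Adj p.2 q.2) ∨ (p.2 = v ∧ q.2 = v ∧ G.Adj p.1 q.1)
  symm := by
    refine ⟨?_⟩
    rintro ⟨x, y⟩ ⟨x', y'⟩ (⟨h1, h2⟩ | ⟨h1, h2, h3⟩)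
    · exact Or.inl ⟨h1.symm, h2.symm⟩
    · exact Or.inr ⟨h2, h1, h3.symm⟩
  loopless := by
    refine ⟨?_⟩
    rintro ⟨x, y⟩ (⟨_, h⟩ | ⟨_, _, h⟩)
    · exact H.loopless.irrefl _ h
    · exact G.loopless.irrefl _ h

/-- The weight ω(f_x) of the restriction of f to the copy H_x. -/
def copyWeight {α β : Type*} [Fintype β] (f : α × β → ℕ) (x : α) : ℕ :=
  ∑ y, f (x, y)

/-- The graph H − {v} obtained from H by deleting the vertex v. -/
def deleteVertex {β : Type*} (H : SimpleGraph β) (v : β) : SimpleGraph {w : β // w ≠ v} :=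
  SimpleGraph.induce {w : β | w ≠ v} H

/-!
Pick `b` with `ω(f_b) = γ_I(H) - 1`. Then `f(b, v) = 0`, since otherwise `f_b` would itself be an
IDF on `H` of weight below `γ_I(H)`. For any `x`, replace `f_x` by `f_b` with the root raised to
some `c ∈ {1, 2}`, `c ≥ f(x, v)`: the result is again an IDF on `G ∘_v H`, so by minimality of `f`,
`ω(f_x) ≤ c + γ_I(H) - 1`. Taking `c = 1` when `f(x, v) ≤ 1` and `c = 2` otherwise bounds
`ω(f_x)` by `γ_I(H)`, resp. `γ_I(H) + 1`.
-/

open Finset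

section ItalianNumber

variable {γ : Type*} [Fintype γ] {G : SimpleGraph γ}

lemma italianNumber_le_of_isIDF {f : γ → ℕ} (hf : IsIDF G f) : italianNumber G ≤ ∑ u, f u :=
  Nat.sInf_le ⟨f, hf, rfl⟩

lemma exists_isMinIDF (G : SimpleGraph γ) : ∃ f : γ → ℕ, IsMinIDF G f := by
  obtain ⟨f, hf, hw⟩ := Nat.sInf_mem (s := {n | ∃ f : γ → ℕ, IsIDF G f ∧ ∑ u, f u = n})
    ⟨_, fun _ => 2, ⟨fun _ => le_rfl, fun _ h => absurd h two_ne_zero⟩, rfl⟩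
  exact ⟨f, hf, hw⟩

lemma italianNumber_pos [Nonempty γ] (G : SimpleGraph γ) : 0 < italianNumber G := by
  obtain ⟨f, hf, hw⟩ := exists_isMinIDF G
  by_contra! h0
  have hzero : ∀ u, f u = 0 := fun u =>
    (sum_eq_zero_iff.mp (hw.trans (Nat.le_zero.mp h0))) u (mem_univ u)
  obtain ⟨u⟩ := ‹Nonempty γ›
  have := hf.2 u (hzero u)
  simp only [hzero, sum_const_zero] at this
  omega

end ItalianNumber

section RootedProduct

variable {α β : Type*} {G : SimpleGraph α} {H : SimpleGraph β} {v : β}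

noncomputable def replaceCopy (f : α × β → ℕ) (x : α) (g : β → ℕ) : α × β → ℕ :=
  Function.uncurry (Function.update (Function.curry f) x g)

@[simp]
lemma replaceCopy_apply_self (f : α × β → ℕ) (x : α) (g : β → ℕ) (y : β) :
    replaceCopy f x g (x, y) = g y := by
  simp [replaceCopy]

lemma replaceCopy_apply_of_ne (f : α × β → ℕ) {x z : α} (g : β → ℕ) (hz : z ≠ x) (y : β) :
    replaceCopy f x g (z, y) = f (z, y) := by
  simp [replaceCopy, hz]

variable [Fintype β]

lemma copyWeight_replaceCopy (f : α × β → ℕ) (x : α) (g : β → ℕ) :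
    copyWeight (replaceCopy f x g) = Function.update (copyWeight f) x (∑ y, g y) := by
  funext z
  rcases eq_or_ne z x with rfl | hz
  · simp [copyWeight, replaceCopy]
  · simp [copyWeight, replaceCopy, hz]

lemma sum_update_root_add (f : α × β → ℕ) (b : α) (c : ℕ) :
    ∑ y, Function.update (fun y => f (b, y)) v c y + f (b, v) = c + copyWeight f b := by
  rw [sum_update_of_mem (mem_univ v), copyWeight,
    sum_eq_add_sum_sdiff_singleton_of_mem (mem_univ v) (fun y => f (b, y))]
  ring

variable [Fintype α]

lemma map_neighborFilter_subset_rootedProd (x : α) (u : β) :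
    (univ.filter (H.Adj u)).map (Function.Embedding.sectR x β) ⊆
      univ.filter ((rootedProd G H v).Adj (x, u)) := by
  intro q hq
  obtain ⟨w, hw, rfl⟩ := mem_map.mp hq
  simp only [mem_filter, mem_univ, true_and] at hw ⊢
  exact Or.inl ⟨rfl, hw⟩

lemma neighborFilter_rootedProd_of_ne_root (x : α) {u : β} (hu : u ≠ v) :
    univ.filter ((rootedProd G H v).Adj (x, u)) =
      (univ.filter (H.Adj u)).map (Function.Embedding.sectR x β) := by
  refine Finset.Subset.antisymm ?_ (map_neighborFilter_subset_rootedProd x u)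
  rintro ⟨z, w⟩ hq
  simp only [mem_filter, mem_univ, true_and] at hq
  rcases hq with ⟨rfl, hw⟩ | ⟨h, -⟩
  · exact mem_map.mpr ⟨w, by simpa using hw, rfl⟩
  · exact absurd h hu

lemma sum_neighbor_copy_le_sum_neighbor_rootedProd (F : α × β → ℕ) (x : α) (u : β) :
    ∑ w ∈ univ.filter (H.Adj u), F (x, w) ≤
      ∑ q ∈ univ.filter ((rootedProd G H v).Adj (x, u)), F q :=
  (sum_map _ (Function.Embedding.sectR x β) F).symm.trans_le
    (sum_le_sum_of_subset (map_neighborFilter_subset_rootedProd x u))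

lemma sum_neighbor_rootedProd_of_ne_root (F : α × β → ℕ) (x : α) {u : β} (hu : u ≠ v) :
    ∑ q ∈ univ.filter ((rootedProd G H v).Adj (x, u)), F q =
      ∑ w ∈ univ.filter (H.Adj u), F (x, w) := by
  rw [neighborFilter_rootedProd_of_ne_root x hu, sum_map]
  rfl

lemma sum_eq_sum_copyWeight (f : α × β → ℕ) : ∑ q, f q = ∑ x, copyWeight f x :=
  Fintype.sum_prod_type f

lemma isIDF_copy_of_root_ne_zero {f : α × β → ℕ} (hf : IsIDF (rootedProd G H v) f) {x : α}
    (hx : f (x, v) ≠ 0) : IsIDF H (fun y => f (x, y)) := by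
  refine ⟨fun u => hf.1 (x, u), fun u hu => ?_⟩
  have huv : u ≠ v := by rintro rfl; exact hx hu
  rw [← sum_neighbor_rootedProd_of_ne_root f x huv]
  exact hf.2 (x, u) hu

lemma root_eq_zero_of_copyWeight_lt {f : α × β → ℕ} (hf : IsIDF (rootedProd G H v) f) {x : α}
    (hx : copyWeight f x < italianNumber H) : f (x, v) = 0 := by
  by_contra h
  exact absurd (italianNumber_le_of_isIDF (isIDF_copy_of_root_ne_zero hf h)) (not_le.mpr hx)

lemma sum_replaceCopy_add_copyWeight (f : α × β → ℕ) (x : α) (g : β → ℕ) :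
    ∑ q, replaceCopy f x g q + copyWeight f x = ∑ q, f q + ∑ y, g y := by
  rw [sum_eq_sum_copyWeight, sum_eq_sum_copyWeight, copyWeight_replaceCopy,
    sum_update_of_mem (mem_univ x), 
    sum_eq_add_sum_sdiff_singleton_of_mem (mem_univ x) (copyWeight f)]
  ring

lemma isIDF_replaceCopy {f : α × β → ℕ} (hf : IsIDF (rootedProd G H v) f) {x : α} {g : β → ℕ}
    (hg : IsIDF H g) (hgv : f (x, v) ≤ g v) : IsIDF (rootedProd G H v) (replaceCopy f x g) := by
  refine ⟨fun ⟨z, u⟩ => ?_, fun ⟨z, u⟩ hzu => ?_⟩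
  · rcases eq_or_ne z x with rfl | hz
    · simpa only [replaceCopy_apply_self] using hg.1 u
    · simpa only [replaceCopy_apply_of_ne _ _ hz] using hf.1 (z, u)
  rcases eq_or_ne z x with rfl | hz
  · rw [replaceCopy_apply_self] at hzu
    calc 2 ≤ ∑ w ∈ univ.filter (H.Adj u), g w := hg.2 u hzu
      _ = ∑ w ∈ univ.filter (H.Adj u), replaceCopy f z g (z, w) := by
        simp only [replaceCopy_apply_self]
      _ ≤ _ := sum_neighbor_copy_le_sum_neighbor_rootedProd _ z u
  · rw [replaceCopy_apply_of_ne _ _ hz] at hzu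
    refine (hf.2 (z, u) hzu).trans (sum_le_sum fun ⟨z', w⟩ hq => ?_)
    rcases eq_or_ne z' x with rfl | hz'
    · obtain ⟨h, -⟩ | ⟨-, rfl, -⟩ := (mem_filter.mp hq).2
      · exact absurd h hz
      · simpa only [replaceCopy_apply_self] using hgv
    · rw [replaceCopy_apply_of_ne _ _ hz']

lemma isIDF_update_root {f : α × β → ℕ} (hf : IsIDF (rootedProd G H v) f) (b : α) {c : ℕ}
    (hc0 : c ≠ 0) (hc2 : c ≤ 2) (hbc : f (b, v) ≤ c) :
    IsIDF H (Function.update (fun y => f (b, y)) v c) := by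
  have hle : ∀ y, f (b, y) ≤ Function.update (fun y => f (b, y)) v c y := fun y => by
    rcases eq_or_ne y v with rfl | hy
    · simpa using hbc
    · simp [hy]
  refine ⟨fun u => ?_, fun u hu => ?_⟩
  · rcases eq_or_ne u v with rfl | hu
    · simpa using hc2
    · simpa [hu] using hf.1 (b, u)
  have huv : u ≠ v := by rintro rfl; simp [hc0] at hu
  rw [Function.update_of_ne huv] at hu
  calc 2 ≤ ∑ q ∈ univ.filter ((rootedProd G H v).Adj (b, u)), f q := hf.2 (b, u) hu
    _ = ∑ w ∈ univ.filter (H.Adj u), f (b, w) := sum_neighbor_rootedProd_of_ne_root f b huv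
    _ ≤ _ := sum_le_sum fun y _ => hle y

/-- Replace `f_x` by `f_b` with its root raised to `c`, and compare weights. -/
lemma copyWeight_add_root_le_of_isMinIDF {f : α × β → ℕ} (hf : IsMinIDF (rootedProd G H v) f)
    {x b : α} {c : ℕ} (hc0 : c ≠ 0) (hc2 : c ≤ 2) (hxc : f (x, v) ≤ c) (hbc : f (b, v) ≤ c) :
    copyWeight f x + f (b, v) ≤ c + copyWeight f b := by
  set g := Function.update (fun y => f (b, y)) v c
  have hF : IsIDF (rootedProd G H v) (replaceCopy f x g) :=
    isIDF_replaceCopy hf.1 (isIDF_update_root hf.1 b hc0 hc2 hbc) (by simpa [g] using hxc)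
  have hmin := italianNumber_le_of_isIDF hF
  have hweight := sum_replaceCopy_add_copyWeight f x g
  have hg : ∑ y, g y + f (b, v) = c + copyWeight f b := sum_update_root_add f b c
  rw [← hf.2] at hmin
  omega

end RootedProduct

theorem stmt3_general {α β : Type*} [Fintype α] [Fintype β]
    (G : SimpleGraph α) (H : SimpleGraph β) (v : β)
    (f : α × β → ℕ) (hf : IsMinIDF (rootedProd G H v) f)
    (hB : ∃ x : α, copyWeight f x = italianNumber H - 1) :
    {x : α | italianNumber H ≤ copyWeight f x} =
      {x : α | (italianNumber H ≤ copyWeight f x) ∧ f (x, v) = 0 ∧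
          copyWeight f x = italianNumber H} ∪
      {x : α | (italianNumber H ≤ copyWeight f x) ∧ f (x, v) = 1 ∧
          copyWeight f x = italianNumber H} ∪
      {x : α | (italianNumber H ≤ copyWeight f x) ∧ f (x, v) = 2 ∧
          copyWeight f x = italianNumber H} ∪
      {x : α | (italianNumber H ≤ copyWeight f x) ∧ f (x, v) = 2 ∧
          copyWeight f x = italianNumber H + 1} := by
  obtain ⟨b, hb⟩ := hB
  have : Nonempty β := ⟨v⟩
  have hm := italianNumber_pos H
  have hbv : f (b, v) = 0 := root_eq_zero_of_copyWeight_lt hf.1 (by omega)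
  ext x
  simp only [Set.mem_ofPred_eq, Set.mem_union]
  refine ⟨fun hx => ?_, by rintro (((⟨h, -⟩ | ⟨h, -⟩) | ⟨h, -⟩) | ⟨h, -⟩) <;> exact h⟩
  have hx2 : f (x, v) ≤ 2 := hf.1.1 (x, v)
  have hle2 := copyWeight_add_root_le_of_isMinIDF hf two_ne_zero le_rfl hx2
    (hbv.trans_le zero_le_two)
  rcases Nat.lt_or_ge 1 (f (x, v)) with hx1 | hx1
  · omega
  · have hle1 := copyWeight_add_root_le_of_isMinIDF hf one_ne_zero one_le_two hx1
      (hbv.trans_le zero_le_one)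
    omega

/-- Corollary of Lemma 3: for a γ_I(G∘_v H)-function f with B_f ≠ ∅,
writing m = γ_I(H), A_f = A_f^{0,m} ∪ A_f^{1,m} ∪ A_f^{2,m} ∪ A_f^{2,m+1},
where A_f^{i,j} = {x ∈ A_f : f(x) = i and ω(f_x) = j}. -/
theorem stmt3 {α β : Type*} [Fintype α] [Nonempty α] [Fintype β]
    (G : SimpleGraph α) (H : SimpleGraph β) (v : β)
    (f : α × β → ℕ) (hf : IsMinIDF (rootedProd G H v) f)
    (hB : ∃ x : α, copyWeight f x = italianNumber H - 1) :
    {x : α | italianNumber H ≤ copyWeight f x} =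
      {x : α | (italianNumber H ≤ copyWeight f x) ∧ f (x, v) = 0 ∧
          copyWeight f x = italianNumber H} ∪
      {x : α | (italianNumber H ≤ copyWeight f x) ∧ f (x, v) = 1 ∧
          copyWeight f x = italianNumber H} ∪
      {x : α | (italianNumber H ≤ copyWeight f x) ∧ f (x, v) = 2 ∧
          copyWeight f x = italianNumber H} ∪
      {x : α | (italianNumber H ≤ copyWeight f x) ∧ f (x, v) = 2 ∧
          copyWeight f x = italianNumber H + 1} :=
  stmt3_general G H v f hf hB
end

section
/- For any graph G, any integer t ≥ 3 and any vertex v of the cycle graph C_t, γ_I(G∘_v C_t) = n(G)·⌈t/2⌉. -/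
open Finset

open scoped Classical

/-!
Only the root of a copy of `C_t` has neighbours outside that copy, so an IDF of `G ∘_v C_t`
restricts on every copy to a function `f` satisfying the Italian condition at all vertices but
the root. Such an `f` has weight at least `⌈t/2⌉`: the local charge
`c y = 2 f y + f (y - 1) + f (y + 1)` sums to `4 ω(f)` and is at least `2` off the root; if it
is below `2` at the root, then a neighbour of the root is `0`, so the vertex beyond it carries
`2` and its charge `≥ 4` pays the deficit. Conversely, the indicator of the even-indexed
vertices of every copy is an IDF of weight `n(G) ⌈t/2⌉`.
-/

namespace SimpleGraph

variable {α β : Type*}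

lemma rootedProd_adj_of_ne_root {G : SimpleGraph α} {H : SimpleGraph β} {v y : β} (hy : y ≠ v)
    (x : α) (q : α × β) : (rootedProd G H v).Adj (x, y) q ↔ x = q.1 ∧ H.Adj y q.2 := by
  simp [rootedProd, hy]

variable [Fintype α] [Fintype β]

lemma map_filter_adj_subset_filter_rootedProd_adj (G : SimpleGraph α) (H : SimpleGraph β)
    (v : β) (x : α) (y : β) :
    (univ.filter (fun w => H.Adj y w)).map (Function.Embedding.sectR x β) ⊆
      univ.filter (fun q => (rootedProd G H v).Adj (x, y) q) := by
  intro q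
  simp only [mem_map, mem_filter, mem_univ, true_and, Function.Embedding.sectR_apply]
  rintro ⟨w, hw, rfl⟩
  exact Or.inl ⟨rfl, hw⟩

lemma filter_rootedProd_adj_of_ne_root (G : SimpleGraph α) (H : SimpleGraph β) {v y : β}
    (hy : y ≠ v) (x : α) :
    univ.filter (fun q => (rootedProd G H v).Adj (x, y) q) =
      (univ.filter (fun w => H.Adj y w)).map (Function.Embedding.sectR x β) := by
  ext ⟨a, b⟩
  simp [rootedProd_adj_of_ne_root hy, and_comm, eq_comm]

end SimpleGraph

open SimpleGraph

section Italian

variable {α β : Type*} [Fintype α] [Fintype β]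

lemma italianNumber_le {G : SimpleGraph α} {f : α → ℕ} (hf : IsIDF G f) :
    italianNumber G ≤ ∑ u, f u :=
  Nat.sInf_le ⟨f, hf, rfl⟩

lemma le_italianNumber {G : SimpleGraph α} {k : ℕ} (hk : ∀ f, IsIDF G f → k ≤ ∑ u, f u) :
    k ≤ italianNumber G :=
  le_csInf ⟨_, fun _ => 1, ⟨by simp, by simp⟩, rfl⟩ <| by
    rintro _ ⟨f, hf, rfl⟩
    exact hk f hf

def IsItalianAwayFrom (H : SimpleGraph β) (v : β) (f : β → ℕ) : Prop :=
  ∀ y ≠ v, f y = 0 → 2 ≤ ∑ w ∈ univ.filter (fun w => H.Adj y w), f w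

lemma IsIDF.isItalianAwayFrom_copy {G : SimpleGraph α} {H : SimpleGraph β} {v : β}
    {f : α × β → ℕ} (hf : IsIDF (rootedProd G H v) f) (x : α) :
    IsItalianAwayFrom H v (fun y => f (x, y)) := by
  intro y hy h0
  have hdom := hf.2 (x, y) h0
  rwa [filter_rootedProd_adj_of_ne_root G H hy, sum_map] at hdom

lemma IsIDF.rootedProd_snd {H : SimpleGraph β} {g : β → ℕ} (hg : IsIDF H g)
    (G : SimpleGraph α) (v : β) : IsIDF (rootedProd G H v) (fun p => g p.2) := by
  refine ⟨fun p => hg.1 p.2, fun ⟨x, y⟩ h0 => ?_⟩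
  calc 2 ≤ ∑ w ∈ univ.filter (fun w => H.Adj y w), g w := hg.2 y h0
    _ = ∑ q ∈ (univ.filter (fun w => H.Adj y w)).map (Function.Embedding.sectR x β),
          g q.2 := by rw [sum_map]; rfl
    _ ≤ _ := sum_le_sum_of_subset (map_filter_adj_subset_filter_rootedProd_adj G H v x y)

lemma italianNumber_rootedProd_le (G : SimpleGraph α) {H : SimpleGraph β} (v : β)
    {g : β → ℕ} (hg : IsIDF H g) :
    italianNumber (rootedProd G H v) ≤ Fintype.card α * ∑ y, g y := by
  simpa [Fintype.sum_prod_type] using italianNumber_le (hg.rootedProd_snd G v)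

lemma card_mul_le_italianNumber_rootedProd (G : SimpleGraph α) (H : SimpleGraph β) (v : β)
    {k : ℕ} (hk : ∀ f, IsItalianAwayFrom H v f → k ≤ ∑ y, f y) :
    Fintype.card α * k ≤ italianNumber (rootedProd G H v) := by
  refine le_italianNumber fun f hf => ?_
  rw [Fintype.sum_prod_type, ← smul_eq_mul, ← card_univ, ← sum_const]
  exact sum_le_sum fun x _ => hk _ (hf.isItalianAwayFrom_copy x)

end Italian

section Cycle

variable {n : ℕ}

lemma Fin.sub_one_ne_add_one (y : Fin (n + 3)) : y - 1 ≠ y + 1 := by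
  intro h
  have hdeg := cycleGraph_degree_three_le (v := y)
  rw [cycleGraph_degree_two_le, h, pair_eq_singleton, card_singleton] at hdeg
  exact absurd hdeg (by decide)

lemma sum_filter_cycleGraph_adj (f : Fin (n + 3) → ℕ) (y : Fin (n + 3))
    [DecidablePred fun w => (cycleGraph (n + 3)).Adj y w] :
    ∑ w ∈ univ.filter (fun w => (cycleGraph (n + 3)).Adj y w), f w = f (y - 1) + f (y + 1) := by
  have hnbr : univ.filter (fun w => (cycleGraph (n + 3)).Adj y w) = {y - 1, y + 1} := by
    ext w
    rw [mem_filter, ← mem_neighborFinset, cycleGraph_neighborFinset, and_iff_right (mem_univ w)]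
  rw [hnbr, sum_pair (Fin.sub_one_ne_add_one y)]

lemma isItalianAwayFrom_cycleGraph_iff {v : Fin (n + 3)} {f : Fin (n + 3) → ℕ} :
    IsItalianAwayFrom (cycleGraph (n + 3)) v f ↔
      ∀ y ≠ v, f y = 0 → 2 ≤ f (y - 1) + f (y + 1) := by
  simp only [IsItalianAwayFrom, sum_filter_cycleGraph_adj]

lemma isIDF_cycleGraph_ite_even :
    IsIDF (cycleGraph (n + 3)) (fun y => if Even (y : ℕ) then 1 else 0) := by
  refine ⟨fun _ => by beta_reduce; split_ifs <;> omega, fun y h0 => ?_⟩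
  have hodd : (y : ℕ) % 2 = 1 := by simpa [← Nat.odd_iff, Nat.not_even_iff_odd] using h0
  have hy0 : y ≠ 0 := by
    rintro rfl
    simp at hodd
  have hprev : Even ((y - 1 : Fin (n + 3)) : ℕ) := by
    rw [Fin.coe_sub_one, if_neg hy0, Nat.even_iff]
    omega
  have hnext : Even ((y + 1 : Fin (n + 3)) : ℕ) := by
    rw [Fin.val_add_one]
    split_ifs
    · exact Even.zero
    · rw [Nat.even_iff]
      omega
  rw [sum_filter_cycleGraph_adj]
  simp [hprev, hnext]

lemma sum_fin_ite_even (m : ℕ) :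
    ∑ y : Fin m, (if Even (y : ℕ) then 1 else 0) = (m + 1) / 2 := by
  rw [Fin.sum_univ_eq_sum_range (fun i => if Even i then 1 else 0)]
  induction m with
  | zero => rfl
  | succ k ih =>
    rw [sum_range_succ, ih]
    simp only [Nat.even_iff]
    split_ifs <;> omega

lemma exists_ne_two_le_of_italian_away_from {v : Fin (n + 3)} {f : Fin (n + 3) → ℕ}
    (hf : ∀ y ≠ v, f y = 0 → 2 ≤ f (y - 1) + f (y + 1))
    (hv : 2 * f v + f (v - 1) + f (v + 1) < 2) : ∃ w ≠ v, 2 ≤ f w := by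
  rcases (by omega : f (v - 1) = 0 ∨ f (v + 1) = 0) with h | h
  · refine ⟨v - 1 - 1, fun h' => Fin.sub_one_ne_add_one (v - 1) (by rw [sub_add_cancel, h']),
      ?_⟩
    have := hf (v - 1) (by simp) h
    rw [sub_add_cancel] at this
    omega
  · refine ⟨v + 1 + 1,
      fun h' => Fin.sub_one_ne_add_one (v + 1) (by rw [add_sub_cancel_right, h']), ?_⟩
    have := hf (v + 1) (by simp) h
    rw [add_sub_cancel_right] at this
    omega

lemma le_two_mul_sum_of_italian_away_from {v : Fin (n + 3)} {f : Fin (n + 3) → ℕ}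
    (hf : ∀ y ≠ v, f y = 0 → 2 ≤ f (y - 1) + f (y + 1)) : n + 3 ≤ 2 * ∑ y, f y := by
  obtain ⟨c, hc⟩ : ∃ c : Fin (n + 3) → ℕ, ∀ y, c y = 2 * f y + f (y - 1) + f (y + 1) :=
    ⟨_, fun _ => rfl⟩
  have hc_sum : ∑ y, c y = 4 * ∑ y, f y := by
    have hsub : ∑ y, f (y - 1) = ∑ y, f y := Equiv.sum_comp (Equiv.subRight 1) f
    have hadd : ∑ y, f (y + 1) = ∑ y, f y := Equiv.sum_comp (Equiv.addRight 1) f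
    simp only [hc, sum_add_distrib, ← mul_sum, hsub, hadd]
    ring
  have hc_two : ∀ y ≠ v, 2 ≤ c y := by
    intro y hy
    have := hc y
    by_cases h : f y = 0
    · have := hf y hy h
      omega
    · omega
  -- `c ≥ 2` everywhere, except possibly at the root, where the deficit is paid by `c w ≥ 4`
  obtain ⟨w, hw⟩ :
      ∃ w, ∀ y, 2 + (if y = w then 2 else 0) ≤ c y + (if y = v then 2 else 0) := by
    by_cases hv : 2 ≤ c v
    · refine ⟨v, fun y => ?_⟩
      by_cases hy : y = v
      · simp [hy]
        omega
      · simp [hy, hc_two y hy]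
    obtain ⟨w, hwv, hw⟩ := exists_ne_two_le_of_italian_away_from hf (by rw [← hc]; omega)
    refine ⟨w, fun y => ?_⟩
    by_cases hyv : y = v
    · simp [hyv, Ne.symm hwv]
    by_cases hyw : y = w
    · simp only [hyw, hwv, if_true, if_false, hc]
      omega
    · simp [hyv, hyw, hc_two y hyv]
  have hsum := sum_le_sum fun y (_ : y ∈ univ) => hw y
  simp only [sum_add_distrib, sum_ite_eq', mem_univ, if_true, sum_const, card_univ,
    Fintype.card_fin, smul_eq_mul] at hsum
  omega

end Cycle

theorem stmt14_general {α : Type*} [Fintype α] (G : SimpleGraph α)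
    (t : ℕ) (ht : 3 ≤ t) (v : Fin t) :
    italianNumber (rootedProd G (SimpleGraph.cycleGraph t) v) =
      Fintype.card α * ((t + 1) / 2) := by
  obtain ⟨n, rfl⟩ : ∃ n, t = n + 3 := ⟨t - 3, by omega⟩
  refine le_antisymm ?_ (card_mul_le_italianNumber_rootedProd G _ v fun f hf => ?_)
  · exact (italianNumber_rootedProd_le G v isIDF_cycleGraph_ite_even).trans_eq
      (by rw [sum_fin_ite_even])
  · have := le_two_mul_sum_of_italian_away_from (isItalianAwayFrom_cycleGraph_iff.1 hf)
    omega

/-- Corollary: for any graph G, t ≥ 3 and any vertex v of the cycle C_t,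
γ_I(G∘_v C_t) = n(G)·⌈t/2⌉. -/
theorem stmt14 {α : Type*} [Fintype α] [Nonempty α] (G : SimpleGraph α)
    (t : ℕ) (ht : 3 ≤ t) (v : Fin t) :
    italianNumber (rootedProd G (SimpleGraph.cycleGraph t) v) =
      Fintype.card α * ((t + 1) / 2) :=
  stmt14_general G t ht v
end
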